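/- Let Σ be a finite alphabet and w a word in Σ*. If a word x ∈ Σ* is not in the ideal Idl((Σ∖{b₁})*·b₁°·(Σ∖{b₂})*·b₂°⋯(Σ∖{b_{n−1}})*·b_{n−1}°·(Σ∖{bₙ})*) where w = b₁⋯bₙ, then w ≼ x (w is a subword of x). -/
import Mathlib


def IsDirectedLang {A : Type*} (L : Set (List A)) : Prop :=
  ∀ u ∈ L, ∀ v ∈ L, ∃ w ∈ L, u.Sublist w ∧ v.Sublist w

def dcl {A : Type*} (L : Set (List A)) : Set (List A) := {u | ∃ v ∈ L, u.Sublist v}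

def DownwardClosed {A : Type*} (D : Set (List A)) : Prop :=
  ∀ u v : List A, u.Sublist v → v ∈ D → u ∈ D

def IsIdeal {A : Type*} (I : Set (List A)) : Prop :=
  I.Nonempty ∧ DownwardClosed I ∧ IsDirectedLang I

inductive Atom (A : Type*) where
  | single : A → Atom A
  | alph : Finset A → Atom A

def Atom.lang {A : Type*} : Atom A → Set (List A)
  | .single a => {[], [a]}
  | .alph d => {w | ∀ c ∈ w, c ∈ d}

def Atom.Valid {A : Type*} : Atom A → Prop
  | .single _ => True
  | .alph d => d.Nonempty

def conc {A : Type*} (L M : Set (List A)) : Set (List A) :=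
  {w | ∃ u ∈ L, ∃ v ∈ M, w = u ++ v}

def Idl {A : Type*} : List (Atom A) → Set (List A)
  | [] => {[]}
  | α :: r => conc α.lang (Idl r)

def LeftAbsorbs {A : Type*} (α β : Atom A) : Prop := Idl [α, β] = Idl [α]
def RightAbsorbs {A : Type*} (α β : Atom A) : Prop := Idl [α, β] = Idl [β]
def Absorptive {A : Type*} (α β : Atom A) : Prop := LeftAbsorbs α β ∨ RightAbsorbs α β
def Reduced {A : Type*} (r : List (Atom A)) : Prop := r.Chain' fun α β => ¬ Absorptive α β

def atomWeight {A : Type*} (k : ℕ) : Atom A → ℕ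
  | .single _ => 1
  | .alph d => (k+1) ^ d.card

def repWeight {A : Type*} (k : ℕ) (r : List (Atom A)) : ℕ := (r.map (atomWeight k)).sum

def compRep {A : Type*} [Fintype A] [DecidableEq A] : List A → List (Atom A)
  | [] => []
  | [b] => [Atom.alph {b}ᶜ]
  | b :: c :: rest => Atom.alph {b}ᶜ :: Atom.single b :: compRep (c :: rest)


lemma nil_mem_Idl {A : Type*} (r : List (Atom A)) : [] ∈ Idl r := by
  induction r with
  | nil => simp [Idl]
  | cons α r ih =>
    refine ⟨[], ?_, [], ih, rfl⟩
    cases α with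
    | single a => left; rfl
    | alph d => intro c hc; simp at hc

lemma split_first {A : Type*} [DecidableEq A] (b : A) (x : List A) (hb : b ∈ x) :
    ∃ x₁ x₂, x = x₁ ++ b :: x₂ ∧ b ∉ x₁ := by
  induction x with
  | nil => simp at hb
  | cons a t ih =>
    by_cases hab : a = b
    · exact ⟨[], t, by simp [hab], by simp⟩
    · have hbt : b ∈ t := by
        rcases List.mem_cons.mp hb with h | h
        · exact absurd h.symm hab
        · exact h
      obtain ⟨x₁, x₂, hx, hnb⟩ := ih hbt
      exact ⟨a :: x₁, x₂, by simp [hx], by simp [hnb]; exact fun h => hab h.symm⟩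

theorem not_mem_complement_ideal_subword {A : Type*} [Fintype A] [DecidableEq A]
    (hcard : 2 ≤ Fintype.card A) (w x : List A)
    (h : x ∉ Idl (compRep w)) :
    w.Sublist x := by
  induction w generalizing x with
  | nil => exact List.nil_sublist x
  | cons b t ih =>
    cases t with
    | nil =>
      have hb : b ∈ x := by
        by_contra hb
        apply h
        refine ⟨x, ?_, [], rfl, by simp⟩
        intro c hc
        simp only [Finset.mem_compl, Finset.mem_singleton]
        exact fun hcb => hb (hcb ▸ hc)
      exact List.singleton_sublist.mpr hb
    | cons c rest =>
      have hb : b ∈ x := by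
        by_contra hb
        apply h
        refine ⟨x, ?_, [], ⟨[], Or.inl rfl, [], nil_mem_Idl _, rfl⟩, by simp⟩
        intro e he
        simp only [Finset.mem_compl, Finset.mem_singleton]
        exact fun hcb => hb (hcb ▸ he)
      obtain ⟨x₁, x₂, hx, hnb⟩ := split_first b x hb
      have hx₂ : x₂ ∉ Idl (compRep (c :: rest)) := by
        intro hmem
        apply h
        refine ⟨x₁, ?_, [b] ++ x₂, ⟨[b], Or.inr rfl, x₂, hmem, rfl⟩, by simp [hx]⟩
        intro e he
        simp only [Finset.mem_compl, Finset.mem_singleton]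
        exact fun hcb => hnb (hcb ▸ he)
      have hsub : (c :: rest).Sublist x₂ := ih x₂ hx₂
      have h1 : (b :: c :: rest).Sublist (b :: x₂) := hsub.cons₂ b
      have h2 : (b :: x₂).Sublist (x₁ ++ b :: x₂) := List.sublist_append_right x₁ _
      rw [hx]
      exact h1.trans h2
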